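/- Let n ≥ 2 and let f ∈ ℂ[x₀,…,xₙ] be homogeneous of degree d such that V = V(f) ⊆ ℙⁿ has only isolated singularities, and let p = (1:0:⋯:0) be a singular point of V. Set g(y₁,…,yₙ) = f(1,y₁,…,yₙ). Then g does NOT belong to the ideal (g₁,…,gₙ) in the localization of ℂ[y₁,…,yₙ] at the maximal ideal (y₁,…,yₙ) if and only if for every Jacobian syzygy (A₀,…,Aₙ) ∈ R^{n+1} (i.e. every tuple with A₀∂₀f + ⋯ + Aₙ∂ₙf = 0) and every index k ∈ {0,…,n}, one has Aₖ(1,0,…,0) = 0. -/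

import Mathlib

open MvPolynomial

noncomputable section

/-- Dehomogenization with respect to `x₀`: substitute `x₀ = 1`, `xᵢ = yᵢ`. -/
def deh (n : ℕ) : MvPolynomial (Fin (n + 1)) ℂ →ₐ[ℂ] MvPolynomial (Fin n) ℂ :=
  aeval (fun i => Fin.cases 1 (fun j => X j) i)

/-- The point `(1:0:⋯:0)`. -/
def pt (n : ℕ) : Fin (n + 1) → ℂ := fun i => if i = 0 then 1 else 0

/-- Saito's local condition at the origin: `g` lies in the ideal generated by its partial
derivatives in the localization of `ℂ[y₁,…,yₙ]` at the maximal ideal `(y₁,…,yₙ)`;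
equivalently, `u·g ∈ (g₁,…,gₙ)` for some polynomial `u` with `u(0) ≠ 0`. -/
def SaitoQH {n : ℕ} (g : MvPolynomial (Fin n) ℂ) : Prop :=
  ∃ u : MvPolynomial (Fin n) ℂ, eval (0 : Fin n → ℂ) u ≠ 0 ∧
    u * g ∈ Ideal.span (Set.range fun j : Fin n => pderiv j g)

/-!
Dehomogenizing a syzygy `∑ Aᵢ ∂ᵢf = 0` at `x₀ = 1` and using Euler's identity
`∂₀f(1, y) = d·g - ∑ yⱼ gⱼ` turns it into a relation `w·g + ∑ cⱼ gⱼ = 0` with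
`w = d·A₀(1, y)` and `cⱼ = Aⱼ₊₁(1, y) - yⱼ·A₀(1, y)`; conversely every such relation
homogenizes back to a syzygy. A relation with `w(0) ≠ 0` is Saito's condition, so it remains
to see that the `cⱼ` always vanish at an isolated singular point. The vector field
`D = ∑ cⱼ ∂ⱼ` preserves the Tjurina ideal `T = (g, g₁, …, gₙ)`, whose zero locus is finite.
If `cⱼ(0) ≠ 0`, the Nullstellensatz gives `s·yⱼᴺ ∈ T` with `s(0) ≠ 0`, and each application
of `D` lowers the exponent of `yⱼ` while keeping a cofactor that is a unit at `0`; in the end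
a unit lies in `T ⊆ (y₁, …, yₙ)`.
-/

namespace MvPolynomial

variable {R σ : Type*} [CommRing R]

theorem IsHomogeneous.eval_smul {φ : MvPolynomial σ R} {n : ℕ} (h : φ.IsHomogeneous n)
    (c : R) (v : σ → R) : eval (c • v) φ = c ^ n * eval v φ := by
  simp only [eval_eq, Finset.mul_sum]
  refine Finset.sum_congr rfl fun s hs => ?_
  have hdeg : ∑ i ∈ s.support, s i = n := by
    simpa [Finsupp.weight_apply, Finsupp.sum] using h (mem_support_iff.mp hs)
  simp only [Pi.smul_apply, smul_eq_mul, mul_pow, Finset.prod_mul_distrib,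
    Finset.prod_pow_eq_pow_sum, hdeg]
  ring

theorem pderiv_pderiv_comm (i j : σ) (p : MvPolynomial σ R) :
    pderiv i (pderiv j p) = pderiv j (pderiv i p) := by
  classical
  have : ⁅pderiv i, pderiv j⁆ = (0 : Derivation R (MvPolynomial σ R) _) :=
    derivation_ext fun k => by
      rw [Derivation.commutator_apply]
      simp [pderiv_X, Pi.single_apply, apply_ite]
  have h := congr($this p)
  rwa [Derivation.commutator_apply, Derivation.zero_apply, sub_eq_zero] at h

theorem sum_smul_pderiv_apply [Fintype σ] (c : σ → MvPolynomial σ R) (p : MvPolynomial σ R) :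
    (∑ j, c j • pderiv j) p = ∑ j, c j * pderiv j p := by
  rw [← Derivation.coeFnAddMonoidHom_apply, map_sum, Finset.sum_apply]
  rfl

end MvPolynomial

namespace Derivation

variable {R A : Type*} [CommRing R] [CommRing A] [Algebra R A]

theorem map_mem_span {D : Derivation R A A} {S : Set A} (hS : ∀ s ∈ S, D s ∈ Ideal.span S)
    {a : A} (ha : a ∈ Ideal.span S) : D a ∈ Ideal.span S := by
  induction ha using Submodule.span_induction with
  | mem s hs => exact hS s hs
  | zero => simp
  | add x y _ _ hx hy => simpa using Ideal.add_mem _ hx hy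
  | smul r x hx hDx =>
    rw [smul_eq_mul, leibniz, smul_eq_mul, smul_eq_mul]
    exact Ideal.add_mem _ (Ideal.mul_mem_left _ _ hDx) (Ideal.mul_mem_right _ _ hx)

theorem mul_pow_notMem_of_le_ker {K : Type*} [CommRing K] [NoZeroDivisors K] [CharZero K]
    {D : Derivation R A A} {φ : A →+* K} {I : Ideal A} (hI : I ≤ RingHom.ker φ)
    (hDI : ∀ a ∈ I, D a ∈ I) {y : A} (hy : φ y = 0) (hDy : φ (D y) ≠ 0) (M : ℕ) {e : A}
    (he : φ e ≠ 0) : e * y ^ M ∉ I := by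
  induction M generalizing e with
  | zero => exact fun hmem => he (by simpa using hI hmem)
  | succ M ih =>
    intro hmem
    -- `D (e yᴹ⁺¹) = (D e · y + (M + 1) e · D y) yᴹ`, and the new cofactor is a unit at `φ`
    refine ih (e := D e * y + (M + 1 : ℕ) • (e * D y)) ?_ ?_
    · simpa [hy] using ⟨M.cast_add_one_ne_zero, he, hDy⟩
    · convert hDI _ hmem using 1
      rw [leibniz, leibniz_pow]
      simp only [smul_eq_mul, nsmul_eq_mul, Nat.add_sub_cancel]
      ring

end Derivation

namespace MvPolynomial

variable {K σ : Type*} [Field K]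

theorem exists_eval_eq_one_of_notMem (Z : Finset (σ → K)) {x : σ → K} (hx : x ∉ Z) :
    ∃ s : MvPolynomial σ K, eval x s = 1 ∧ ∀ q ∈ Z, eval q s = 0 := by
  have separate : ∀ q ∈ Z, ∃ s : MvPolynomial σ K, eval x s = 1 ∧ eval q s = 0 := by
    intro q hq
    obtain ⟨i, hi⟩ := Function.ne_iff.mp (ne_of_mem_of_not_mem hq hx)
    refine ⟨C (x i - q i)⁻¹ * (X i - C (q i)), ?_, by simp⟩
    simp [inv_mul_cancel₀ (sub_ne_zero.mpr hi.symm)]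
  choose! s hsx hsq using separate
  refine ⟨∏ q ∈ Z, s q, by simp [map_prod, Finset.prod_eq_one hsx], fun q hq => ?_⟩
  rw [map_prod]
  exact Finset.prod_eq_zero hq (hsq q hq)

theorem exists_mul_pow_mem_of_finite_zeroLocus [IsAlgClosed K] [Finite σ]
    {I : Ideal (MvPolynomial σ K)} (hI : (zeroLocus K I).Finite) {x : σ → K}
    {p : MvPolynomial σ K} (hp : eval x p = 0) :
    ∃ (s : MvPolynomial σ K) (N : ℕ), eval x s ≠ 0 ∧ s * p ^ N ∈ I := by
  classical
  obtain ⟨s, hsx, hsZ⟩ := exists_eval_eq_one_of_notMem (hI.toFinset.erase x)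
    (Finset.notMem_erase x _)
  have hrad : s * p ∈ I.radical := by
    rw [← vanishingIdeal_zeroLocus_eq_radical (K := K)]
    intro q hq
    by_cases hqx : q = x
    · simp [hqx, hp]
    · simp [hsZ q (by simp [hqx, hq])]
  obtain ⟨N, hN⟩ := hrad
  exact ⟨s ^ N, N, by simp [hsx], by rwa [← mul_pow]⟩

def tjurinaIdeal (g : MvPolynomial σ K) : Ideal (MvPolynomial σ K) :=
  Ideal.span (insert g (Set.range fun j => pderiv j g))

theorem mem_zeroLocus_tjurinaIdeal {g : MvPolynomial σ K} {x : σ → K} :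
    x ∈ zeroLocus K (tjurinaIdeal g) ↔ eval x g = 0 ∧ ∀ j, eval x (pderiv j g) = 0 := by
  simp [tjurinaIdeal, zeroLocus_span]

variable [Fintype σ]

theorem sum_smul_pderiv_mem_tjurinaIdeal {g w : MvPolynomial σ K} {c : σ → MvPolynomial σ K}
    (hrel : w * g + ∑ j, c j * pderiv j g = 0) {p : MvPolynomial σ K}
    (hp : p ∈ tjurinaIdeal g) : (∑ j, c j • pderiv j) p ∈ tjurinaIdeal g := by
  have hg : g ∈ tjurinaIdeal g := Ideal.subset_span (Set.mem_insert _ _)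
  have hgj (j : σ) : pderiv j g ∈ tjurinaIdeal g := Ideal.subset_span (Or.inr ⟨j, rfl⟩)
  refine Derivation.map_mem_span ?_ hp
  rintro q (hq | ⟨i, rfl⟩)
  · rw [hq, sum_smul_pderiv_apply, eq_neg_of_add_eq_zero_right hrel]
    exact neg_mem (Ideal.mul_mem_left _ _ hg)
  · have hrel_i := congr(pderiv i $hrel)
    simp only [map_add, map_sum, pderiv_mul, map_zero, Finset.sum_add_distrib] at hrel_i
    have : (∑ j, c j • pderiv j) (pderiv i g) =
        -(pderiv i w * g + w * pderiv i g + ∑ j, pderiv i (c j) * pderiv j g) := by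
      simp_rw [sum_smul_pderiv_apply, pderiv_pderiv_comm _ i]
      linear_combination hrel_i
    rw [this]
    exact neg_mem (add_mem (add_mem (Ideal.mul_mem_left _ _ hg) (Ideal.mul_mem_left _ _ (hgj i)))
      (Ideal.sum_mem _ fun j _ => Ideal.mul_mem_left _ _ (hgj j)))

theorem eval_eq_zero_of_mem_zeroLocus_tjurinaIdeal [IsAlgClosed K] [CharZero K]
    {g w : MvPolynomial σ K} {c : σ → MvPolynomial σ K} (hrel : w * g + ∑ j, c j * pderiv j g = 0)
    (hfin : (zeroLocus K (tjurinaIdeal g)).Finite) {x : σ → K}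
    (hx : x ∈ zeroLocus K (tjurinaIdeal g)) (j : σ) : eval x (c j) = 0 := by
  classical
  by_contra hcx
  have hT : tjurinaIdeal g ≤ RingHom.ker (eval x) := fun p hp => by simpa using hx p hp
  obtain ⟨s, N, hs, hsN⟩ := exists_mul_pow_mem_of_finite_zeroLocus hfin
    (x := x) (p := X j - C (x j)) (by simp)
  refine Derivation.mul_pow_notMem_of_le_ker hT (D := ∑ j, c j • pderiv j)
    (fun p => sum_smul_pderiv_mem_tjurinaIdeal hrel) (by simp) ?_ N hs hsN
  simpa [sum_smul_pderiv_apply, pderiv_X, Pi.single_apply] using hcx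

end MvPolynomial

section Dehomogenization

variable {n : ℕ}

@[simp]
theorem deh_X_zero : deh n (X 0) = 1 := by simp [deh]

@[simp]
theorem deh_X_succ (j : Fin n) : deh n (X j.succ) = X j := by simp [deh]

@[simp]
theorem deh_rename_succ (q : MvPolynomial (Fin n) ℂ) : deh n (rename Fin.succ q) = q := by
  rw [deh, aeval_rename]
  convert aeval_X_left_apply q
  ext j : 1
  simp

theorem eval_deh (F : MvPolynomial (Fin (n + 1)) ℂ) (y : Fin n → ℂ) :
    eval y (deh n F) = eval (Fin.cons 1 y) F := by
  rw [deh, aeval_def, eval_eval₂, eval, coe_eval₂Hom]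
  congr 1
  · ext; simp
  · ext i
    cases i using Fin.cases <;> simp

theorem cons_one_zero_eq_pt : (Fin.cons 1 0 : Fin (n + 1) → ℂ) = pt n := by
  ext i
  cases i using Fin.cases <;> simp [pt, Fin.succ_ne_zero]

theorem eval_zero_deh (F : MvPolynomial (Fin (n + 1)) ℂ) : eval 0 (deh n F) = eval (pt n) F := by
  rw [eval_deh, cons_one_zero_eq_pt]

theorem pderiv_deh (F : MvPolynomial (Fin (n + 1)) ℂ) (j : Fin n) :
    pderiv j (deh n F) = deh n (pderiv j.succ F) := by
  induction F using MvPolynomial.induction_on with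
  | C a => simp [deh]
  | add p q hp hq => simp [hp, hq]
  | mul_X p i hp =>
    cases i using Fin.cases with
    | zero => simp [hp, pderiv_X_of_ne (Fin.succ_ne_zero j).symm]
    | succ i => simp [hp, pderiv_X, Pi.single_apply, apply_ite, Fin.succ_inj]

theorem eq_zero_of_deh_eq_zero {F : MvPolynomial (Fin (n + 1)) ℂ} {M : ℕ}
    (hF : F.IsHomogeneous M) (h : deh n F = 0) : F = 0 := by
  suffices X 0 * F = 0 from (mul_eq_zero.mp this).resolve_left (X_ne_zero 0)
  refine MvPolynomial.funext fun x => ?_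
  rcases eq_or_ne (x 0) 0 with h0 | h0
  · simp [h0]
  · have hx : x = x 0 • Fin.cons 1 (fun j => x j.succ / x 0) := by
      ext i
      cases i using Fin.cases <;> simp [mul_div_cancel₀ _ h0]
    rw [map_zero, eval_mul, hx, hF.eval_smul, ← eval_deh, h]
    simp

end Dehomogenization

section Homogenization

variable {n : ℕ}

/-- The homogenization `x₀ᴺ · p(x₁/x₀, …, xₙ/x₀)` of `p`, for `N ≥ deg p`. -/
def homogenize {R : Type*} [CommSemiring R] (N : ℕ) (p : MvPolynomial (Fin n) R) :
    MvPolynomial (Fin (n + 1)) R :=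
  ∑ k ∈ Finset.range (N + 1), X 0 ^ (N - k) * rename Fin.succ (homogeneousComponent k p)

theorem isHomogeneous_homogenize {R : Type*} [CommSemiring R] (N : ℕ)
    (p : MvPolynomial (Fin n) R) : (homogenize N p).IsHomogeneous N := by
  refine IsHomogeneous.sum _ _ _ fun k hk => ?_
  have hkN : 1 * (N - k) + k = N := by have := Finset.mem_range_succ_iff.mp hk; omega
  have h := ((isHomogeneous_X R 0).pow (N - k)).mul
    ((homogeneousComponent_isHomogeneous k p).rename_isHomogeneous (f := Fin.succ))
  rwa [hkN] at h

theorem deh_homogenize {N : ℕ} {p : MvPolynomial (Fin n) ℂ} (hp : p.totalDegree ≤ N) :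
    deh n (homogenize N p) = p := by
  simp only [homogenize, map_sum, map_mul, map_pow, deh_X_zero, one_pow, one_mul,
    deh_rename_succ]
  conv_rhs => rw [← sum_homogeneousComponent p]
  refine (Finset.sum_subset (Finset.range_subset_range.mpr (by omega)) fun k hk hk' => ?_).symm
  exact homogeneousComponent_eq_zero _ _ (by simp_all)

theorem exists_sum_mul_eq_zero_of_deh {ι : Type*} [Fintype ι]
    {F : ι → MvPolynomial (Fin (n + 1)) ℂ} {e : ℕ} (hF : ∀ i, (F i).IsHomogeneous e)
    {r : ι → MvPolynomial (Fin n) ℂ} (hr : ∑ i, r i * deh n (F i) = 0) :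
    ∃ A : ι → MvPolynomial (Fin (n + 1)) ℂ, ∑ i, A i * F i = 0 ∧ ∀ i, deh n (A i) = r i := by
  classical
  set N := Finset.univ.sup fun i => (r i).totalDegree
  have hN (i : ι) : (r i).totalDegree ≤ N :=
    Finset.le_sup (f := fun i => (r i).totalDegree) (Finset.mem_univ i)
  refine ⟨fun i => homogenize N (r i), eq_zero_of_deh_eq_zero (M := N + e) ?_ ?_,
    fun i => deh_homogenize (hN i)⟩
  · exact IsHomogeneous.sum _ _ _ fun i _ => (isHomogeneous_homogenize N _).mul (hF i)
  · simpa [deh_homogenize (hN _)] using hr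

end Homogenization

section Hypersurface

variable {n d : ℕ} {f : MvPolynomial (Fin (n + 1)) ℂ}

theorem deh_pderiv_zero (hf : f.IsHomogeneous d) :
    deh n (pderiv 0 f) = C (d : ℂ) * deh n f - ∑ j, X j * pderiv j (deh n f) := by
  have h := congr(deh n $(hf.sum_X_mul_pderiv))
  rw [Fin.sum_univ_succ, nsmul_eq_mul] at h
  simp only [map_add, map_sum, map_mul, map_natCast, deh_X_zero, one_mul, deh_X_succ,
    ← pderiv_deh] at h
  rw [map_natCast]
  linear_combination h

theorem sum_mul_deh_pderiv (hf : f.IsHomogeneous d) (r : Fin (n + 1) → MvPolynomial (Fin n) ℂ) :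
    ∑ i, r i * deh n (pderiv i f) =
      C (d : ℂ) * r 0 * deh n f + ∑ j, (r j.succ - r 0 * X j) * pderiv j (deh n f) := by
  simp only [Fin.sum_univ_succ, deh_pderiv_zero hf, ← pderiv_deh, sub_mul,
    Finset.sum_sub_distrib, mul_sub, Finset.mul_sum, mul_assoc]
  ring

theorem mem_zeroLocus_tjurinaIdeal_deh_iff (hf : f.IsHomogeneous d) (hd : d ≠ 0)
    {q : Fin n → ℂ} : q ∈ zeroLocus ℂ (tjurinaIdeal (deh n f)) ↔
      ∀ i, eval (Fin.cons 1 q) (pderiv i f) = 0 := by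
  simp only [mem_zeroLocus_tjurinaIdeal, Fin.forall_fin_succ, ← eval_deh, deh_pderiv_zero hf,
    ← pderiv_deh]
  constructor
  · rintro ⟨hg, hgj⟩
    simp [hg, hgj]
  · rintro ⟨h0, hgj⟩
    simpa [hgj, hd] using h0

theorem finite_affine_singular_set (hf : f.IsHomogeneous d)
    (hiso : {P : Projectivization ℂ (Fin (n + 1) → ℂ) |
      ∀ i, eval P.rep (pderiv i f) = 0}.Finite) :
    {q : Fin n → ℂ | ∀ i, eval (Fin.cons 1 q) (pderiv i f) = 0}.Finite := by
  have hne (q : Fin n → ℂ) : (Fin.cons 1 q : Fin (n + 1) → ℂ) ≠ 0 :=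
    fun h => one_ne_zero (congr_fun h 0)
  let chart (q : Fin n → ℂ) : Projectivization ℂ (Fin (n + 1) → ℂ) :=
    Projectivization.mk ℂ (Fin.cons 1 q) (hne q)
  have hchart : chart.Injective := by
    intro q q' h
    obtain ⟨a, ha⟩ := (Projectivization.mk_eq_mk_iff ℂ _ _ (hne q) (hne q')).mp h
    have ha0 : (a : ℂ) = 1 := by simpa [Units.smul_def] using congr_fun ha 0
    ext j
    simpa [Units.smul_def, ha0] using (congr_fun ha j.succ).symm
  refine (hiso.preimage hchart.injOn).subset fun q hq i => ?_
  obtain ⟨a, ha⟩ := Projectivization.exists_smul_eq_mk_rep ℂ _ (hne q)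
  simp only [chart, ← ha, Units.smul_def, hf.pderiv.eval_smul, hq i, mul_zero]

theorem ne_zero_of_finite_singular_set (hf : f.IsHomogeneous d) (hn : n ≠ 0)
    (hiso : {P : Projectivization ℂ (Fin (n + 1) → ℂ) |
      ∀ i, eval P.rep (pderiv i f) = 0}.Finite) : d ≠ 0 := by
  rintro rfl
  have hf0 : f = C (coeff 0 f) :=
    totalDegree_eq_zero_iff_eq_C.mp ((totalDegree_zero_iff_isHomogeneous _).mpr hf)
  have := finite_affine_singular_set hf hiso
  rw [hf0] at this
  simp only [pderiv_C, map_zero, forall_const, Set.ofPred_true, Set.finite_univ_iff] at this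
  have : NeZero n := ⟨hn⟩
  exact not_finite (Fin n → ℂ)

theorem relation_of_syzygy (hf : f.IsHomogeneous d)
    {A : Fin (n + 1) → MvPolynomial (Fin (n + 1)) ℂ} (hA : ∑ i, A i * pderiv i f = 0) :
    C (d : ℂ) * deh n (A 0) * deh n f +
      ∑ j, (deh n (A j.succ) - deh n (A 0) * X j) * pderiv j (deh n f) = 0 := by
  rw [← sum_mul_deh_pderiv hf fun i => deh n (A i)]
  simpa only [← map_mul, ← map_sum, map_zero] using congr(deh n $hA)

theorem exists_syzygy_of_relation (hf : f.IsHomogeneous d) (hd : d ≠ 0)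
    {w : MvPolynomial (Fin n) ℂ} {c : Fin n → MvPolynomial (Fin n) ℂ}
    (hwc : w * deh n f + ∑ j, c j * pderiv j (deh n f) = 0) :
    ∃ A : Fin (n + 1) → MvPolynomial (Fin (n + 1)) ℂ,
      ∑ i, A i * pderiv i f = 0 ∧ eval (pt n) (A 0) = (d : ℂ)⁻¹ * eval 0 w := by
  have hdC : (d : ℂ) ≠ 0 := Nat.cast_ne_zero.mpr hd
  obtain ⟨A, hA, hAr⟩ := exists_sum_mul_eq_zero_of_deh (fun i => hf.pderiv (i := i))
    (r := Fin.cons (C (d : ℂ)⁻¹ * w) fun j => c j + C (d : ℂ)⁻¹ * w * X j) (by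
      rw [sum_mul_deh_pderiv hf]
      simp only [Fin.cons_zero, Fin.cons_succ, add_sub_cancel_right, ← mul_assoc, ← C_mul,
        mul_inv_cancel₀ hdC, C_1, one_mul]
      exact hwc)
  refine ⟨A, hA, ?_⟩
  rw [← eval_zero_deh, hAr, Fin.cons_zero, eval_mul, eval_C]

end Hypersurface

theorem saitoQH_iff {n : ℕ} {g : MvPolynomial (Fin n) ℂ} :
    SaitoQH g ↔ ∃ (w : MvPolynomial (Fin n) ℂ) (c : Fin n → MvPolynomial (Fin n) ℂ),
      eval 0 w ≠ 0 ∧ w * g + ∑ j, c j * pderiv j g = 0 := by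
  simp only [SaitoQH, Ideal.mem_span_range_iff_exists_fun]
  constructor
  · rintro ⟨u, hu, c, hc⟩
    exact ⟨u, -c, hu, by simp [neg_mul, Finset.sum_neg_distrib, hc]⟩
  · rintro ⟨w, c, hw, hwc⟩
    refine ⟨w, hw, -c, ?_⟩
    simp only [Pi.neg_apply, neg_mul, Finset.sum_neg_distrib]
    linear_combination -hwc

/-- Corollary 3.2: the singular point `p = (1:0:⋯:0)` of a hypersurface `V(f)` with only
isolated singularities is NOT quasi-homogeneous (Saito's condition fails for `g = f(1,y)`)
iff every component of every Jacobian syzygy of `f` vanishes at `p`. -/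
theorem stmt_2 (n d : ℕ) (hn : 2 ≤ n) (f : MvPolynomial (Fin (n + 1)) ℂ)
    (hf : f.IsHomogeneous d)
    (hiso : {P : Projectivization ℂ (Fin (n + 1) → ℂ) |
      ∀ i, eval P.rep (pderiv i f) = 0}.Finite)
    (hsing : ∀ i, eval (pt n) (pderiv i f) = 0) :
    ¬ SaitoQH (deh n f) ↔
      ∀ A : Fin (n + 1) → MvPolynomial (Fin (n + 1)) ℂ,
        (∑ i, A i * pderiv i f = 0) → ∀ k, eval (pt n) (A k) = 0 := by
  have hd : d ≠ 0 := ne_zero_of_finite_singular_set hf (by omega) hiso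
  have hdC : (d : ℂ) ≠ 0 := Nat.cast_ne_zero.mpr hd
  have hfin : (zeroLocus ℂ (tjurinaIdeal (deh n f))).Finite :=
    (finite_affine_singular_set hf hiso).subset fun q =>
      (mem_zeroLocus_tjurinaIdeal_deh_iff hf hd).mp
  have horigin : 0 ∈ zeroLocus ℂ (tjurinaIdeal (deh n f)) :=
    (mem_zeroLocus_tjurinaIdeal_deh_iff hf hd).mpr (cons_one_zero_eq_pt ▸ hsing)
  rw [saitoQH_iff]
  constructor
  · intro hns A hA k
    have hrel := relation_of_syzygy hf hA
    cases k using Fin.cases with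
    | zero =>
      by_contra hk
      refine hns ⟨_, _, ?_, hrel⟩
      rw [eval_mul, eval_C, eval_zero_deh]
      exact mul_ne_zero hdC hk
    | succ j =>
      have h := eval_eq_zero_of_mem_zeroLocus_tjurinaIdeal hrel hfin horigin j
      rwa [eval_sub, eval_mul, eval_X, Pi.zero_apply, mul_zero, sub_zero, eval_zero_deh] at h
  · rintro hall ⟨w, c, hw, hwc⟩
    obtain ⟨A, hA, hA0⟩ := exists_syzygy_of_relation hf hd hwc
    rw [hall A hA 0, eq_comm, mul_eq_zero] at hA0
    exact hw (hA0.resolve_left (inv_ne_zero hdC))
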